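/- arXiv:2312.09192 — 2 statements merged into one kernel-verified Lean document; each statement's English description precedes it below -/
import Mathlib

section
/- Let D be a dense complex linear subspace of a complex Hilbert space H and let {H_t}_{t∈ℝ} be a family of linear maps H_t : D → H each of which is symmetric on D (i.e. ⟨ψ|H_tφ⟩ = ⟨H_tψ|φ⟩ for all ψ, φ ∈ D). Let ψ : ℝ → H be differentiable with ψ(t) ∈ D for all t, and fix t ∈ ℝ. Then ψ'(t) = −i·H_t ψ(t) if and only if for every φ ∈ D one has ω(ψ'(t), φ) = Im⟨ψ'(t)|φ⟩ = Re⟨H_tψ(t)|φ⟩. That is, ψ satisfies the t-dependent Schrödinger equation at t exactly when it satisfies Hamilton's equation for the Hamiltonian function (1/2)·Re⟨ψ|H_tψ⟩ relative to the canonical symplectic form. -/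
open scoped ComplexInnerProductSpace

/-! Since `Im⟨u|i·φ⟩ = Re⟨u|φ⟩`, the imaginary parts of `⟨u|φ⟩` for `φ` ranging over the complex
subspace `D` already determine `⟨u|φ⟩`, hence `u` when `D` is dense. Hamilton's equation is then
the Schrödinger equation tested against `D`, because `Im⟨−i·v|φ⟩ = Re⟨v|φ⟩`. -/

section

variable {E : Type*} [NormedAddCommGroup E] [InnerProductSpace ℂ E]

theorem im_inner_neg_I_smul_left (v w : E) : (⟪(-Complex.I) • v, w⟫).im = (⟪v, w⟫).re := by
  rw [inner_smul_left, map_neg, Complex.conj_I, neg_neg, Complex.I_mul_im]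

theorem Submodule.inner_eq_of_forall_im_inner_eq {D : Submodule ℂ E} {u v : E}
    (h : ∀ φ : D, (⟪u, (φ : E)⟫).im = (⟪v, (φ : E)⟫).im) (φ : D) :
    ⟪u, (φ : E)⟫ = ⟪v, (φ : E)⟫ := by
  have hre := h (Complex.I • φ)
  rw [Submodule.coe_smul, inner_smul_right, inner_smul_right, Complex.I_mul_im,
    Complex.I_mul_im] at hre
  exact Complex.ext hre (h φ)

theorem Dense.eq_iff_forall_im_inner_eq {D : Submodule ℂ E} (hD : Dense (D : Set E)) {u v : E} :
    u = v ↔ ∀ φ : D, (⟪u, (φ : E)⟫).im = (⟪v, (φ : E)⟫).im := by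
  refine ⟨fun huv _ => huv ▸ rfl, fun h => hD.eq_of_inner_left ℂ fun w hw => ?_⟩
  exact Submodule.inner_eq_of_forall_im_inner_eq h ⟨w, hw⟩

end

theorem schrodinger_iff_hamilton_general
    {H : Type*} [NormedAddCommGroup H] [InnerProductSpace ℂ H]
    (D : Submodule ℂ H) (hD : Dense (D : Set H))
    (Ht : ℝ → (D →ₗ[ℂ] H))
    (ψ : ℝ → H) (hmem : ∀ t : ℝ, ψ t ∈ D)
    (ψ' : ℝ → H)
    (t : ℝ) :
    ψ' t = (-Complex.I) • (Ht t ⟨ψ t, hmem t⟩) ↔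
      ∀ φ : D, (⟪ψ' t, (φ : H)⟫).im = (⟪Ht t ⟨ψ t, hmem t⟩, (φ : H)⟫).re := by
  simp only [hD.eq_iff_forall_im_inner_eq, im_inner_neg_I_smul_left]

/-- Let `{H_t}` be a family of symmetric operators on a dense complex subspace `D` of a
complex Hilbert space `H` and let `ψ : ℝ → H` be a differentiable curve taking values in `D`.
Then, at a fixed time `t`, `ψ` satisfies the `t`-dependent Schrödinger equation
`ψ'(t) = −i·H_t ψ(t)` if and only if for every `φ ∈ D` one has
`ω(ψ'(t), φ) = Im⟨ψ'(t)|φ⟩ = Re⟨H_tψ(t)|φ⟩`, i.e. Hamilton's equation for the Hamiltonian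
function `(1/2)·Re⟨ψ|H_tψ⟩` relative to the canonical symplectic form. -/
theorem schrodinger_iff_hamilton
    {H : Type*} [NormedAddCommGroup H] [InnerProductSpace ℂ H] [CompleteSpace H]
    (D : Submodule ℂ H) (hD : Dense (D : Set H))
    (Ht : ℝ → (D →ₗ[ℂ] H))
    (hsym : ∀ (t : ℝ) (ψ φ : D), ⟪(ψ : H), Ht t φ⟫ = ⟪Ht t ψ, (φ : H)⟫)
    (ψ : ℝ → H) (hmem : ∀ t : ℝ, ψ t ∈ D)
    (ψ' : ℝ → H) (hdiff : ∀ s : ℝ, HasDerivAt ψ (ψ' s) s)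
    (t : ℝ) :
    ψ' t = (-Complex.I) • (Ht t ⟨ψ t, hmem t⟩) ↔
      ∀ φ : D, (⟪ψ' t, (φ : H)⟫).im = (⟪Ht t ⟨ψ t, hmem t⟩, (φ : H)⟫).re :=
  schrodinger_iff_hamilton_general D hD Ht ψ hmem ψ' t
end

section
/- Let E be a real Banach space, E* its continuous dual, and Ω the canonical two-form on E × E*, Ω((e₁, α₁), (e₂, α₂)) := α₂(e₁) − α₁(e₂). Then the flat map Ω♭ : E × E* → (E × E*)*, (e, α) ↦ Ω((e, α), ·), is surjective (hence a bijection onto the continuous dual of E × E*) if and only if the canonical evaluation map of E into its double dual E** is surjective, i.e. if and only if E is reflexive. In other words, Ω is a strong symplectic form on E × E* exactly when E is reflexive. -/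
/-- The flat map `Ω♭ : E × E* → (E × E*)*` of the canonical two-form
`Ω((e₁,α₁),(e₂,α₂)) = α₂(e₁) − α₁(e₂)` on `E × E*`, sending `(e, α)` to the continuous
linear functional `(e', α') ↦ α'(e) − α(e')`. -/
noncomputable def canonicalTwoFormFlat (E : Type*) [NormedAddCommGroup E] [NormedSpace ℝ E]
    (p : E × (E →L[ℝ] ℝ)) : (E × (E →L[ℝ] ℝ)) →L[ℝ] ℝ :=
  ((ContinuousLinearMap.apply ℝ ℝ p.1).comp
      (ContinuousLinearMap.snd ℝ E (E →L[ℝ] ℝ)))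
    - (p.2.comp (ContinuousLinearMap.fst ℝ E (E →L[ℝ] ℝ)))

theorem flat_apply (E : Type*) [NormedAddCommGroup E] [NormedSpace ℝ E]
    (p : E × (E →L[ℝ] ℝ)) (x : E × (E →L[ℝ] ℝ)) :
    canonicalTwoFormFlat E p x = x.2 p.1 - p.2 x.1 := by
  simp [canonicalTwoFormFlat]


/-- For a real Banach space `E`, the flat map of the canonical two-form on `E × E*` is always
injective, and it is surjective onto the continuous dual of `E × E*` (hence a bijection) if
and only if the canonical evaluation map of `E` into its double dual is surjective, i.e. iff
`E` is reflexive. In other words, the canonical two-form is a strong symplectic form on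
`E × E*` exactly when `E` is reflexive. -/
theorem canonical_two_form_strong_iff_reflexive
    (E : Type*) [NormedAddCommGroup E] [NormedSpace ℝ E] [CompleteSpace E] :
    Function.Injective (canonicalTwoFormFlat E) ∧
    (Function.Surjective (canonicalTwoFormFlat E) ↔
      Function.Surjective (NormedSpace.inclusionInDoubleDual ℝ E)) := by
  constructor
  · intro p q h
    have h2 : ∀ x, canonicalTwoFormFlat E p x = canonicalTwoFormFlat E q x :=
      fun x => by rw [h]
    have hα : p.2 = q.2 := by
      ext e'
      have := h2 (e', 0)
      simpa [flat_apply] using this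
    have he : p.1 = q.1 := by
      rw [NormedSpace.eq_iff_forall_dual_eq (𝕜 := ℝ)]
      intro g
      have := h2 (0, g)
      simpa [flat_apply] using this
    exact Prod.ext he hα
  · constructor
    · intro hs Φ
      obtain ⟨p, hp⟩ := hs (Φ.comp (ContinuousLinearMap.snd ℝ E (E →L[ℝ] ℝ)))
      have h2 : ∀ x, canonicalTwoFormFlat E p x
          = (Φ.comp (ContinuousLinearMap.snd ℝ E (E →L[ℝ] ℝ))) x := fun x => by rw [hp]
      refine ⟨p.1, ?_⟩
      ext α'
      have := h2 (0, α')
      simpa [flat_apply, NormedSpace.dual_def] using this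
    · intro hs f
      obtain ⟨e, he⟩ := hs (f.comp (ContinuousLinearMap.inr ℝ E (E →L[ℝ] ℝ)))
      refine ⟨(e, -(f.comp (ContinuousLinearMap.inl ℝ E (E →L[ℝ] ℝ)))), ?_⟩
      refine ContinuousLinearMap.ext fun x => ?_
      obtain ⟨e', α'⟩ := x
      have h1 : α' e = f (0, α') := by
        have := congrArg (fun g => g α') he
        simpa [NormedSpace.dual_def] using this
      have h3 : f (e', α') = f (e', 0) + f (0, α') := by
        rw [← f.map_add]; simp
      simp only [flat_apply]
      simp [h1, h3]
      ring
end
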